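/- arXiv:1009.0720 — 2 statements merged into one kernel-verified Lean document; each statement's English description precedes it below -/
import Mathlib

section
/- Let A ∈ ℝ^{m×n}. Then exactly one of the following two conditions holds: (1) there exists x ∈ ℝ^n_{≥0} with x ∉ ker(A) such that Ax ≤ 0 (componentwise); (2) there exists y ∈ ℝ^m_{>0} such that Aᵀy ≥ 0 (componentwise). -/
/-!
The alternatives exclude each other: for `x ≥ 0` and `y > 0` with `Aᵀy ≥ 0` we have
`0 ≤ (Aᵀy) ⬝ᵥ x = y ⬝ᵥ Ax`, which is negative when `Ax ≤ 0` and `Ax ≠ 0`.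

If (1) fails, the cone `C = A ℝⁿ_{≥0}` misses the compact convex set `-Δ`, where `Δ` is the
standard simplex. By conic Carathéodory, `C` is a finite union of images of coordinate faces of the
orthant on which `A` is injective, hence closed, so Hahn–Banach separates `C` strictly from `-Δ`.
The separating functional `y ⬝ᵥ ·` is nonnegative on the cone `C`, i.e. `Aᵀy ≥ 0`, and negative
at each `-eᵢ`, i.e. `y > 0`.
-/

open Function Set Matrix

section

variable {ι E : Type*} [Fintype ι]

lemma exists_nonneg_sub_smul_support_ssubset_of_pos {c d : ι → ℝ} (hc : 0 ≤ c)
    (hdc : d.support ⊆ c.support) (hd : ∃ i, 0 < d i) :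
    ∃ t : ℝ, 0 ≤ c - t • d ∧ (c - t • d).support ⊂ c.support := by
  classical
  set P := Finset.univ.filter fun i => 0 < d i
  have hP : P.Nonempty := let ⟨i, hi⟩ := hd; ⟨i, by simpa [P] using hi⟩
  obtain ⟨j, hjP, hj⟩ := P.exists_min_image (fun i => c i / d i) hP
  have hdj : 0 < d j := by simpa [P] using hjP
  refine ⟨c j / d j, fun i => ?_, ?_⟩
  · rcases le_or_gt (d i) 0 with hdi | hdi
    · have hci : 0 ≤ c i := hc i
      have := mul_nonpos_of_nonneg_of_nonpos (div_nonneg (hc j) hdj.le) hdi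
      simp only [Pi.zero_apply, Pi.sub_apply, Pi.smul_apply, smul_eq_mul, sub_nonneg]
      linarith
    · have := hj i (by simpa [P] using hdi)
      rw [le_div_iff₀ hdi] at this
      simpa using this
  · refine ssubset_of_subset_not_subset ?_ fun h => ?_
    · refine (support_sub _ _).trans (union_subset subset_rfl ?_)
      exact (support_const_smul_subset _ _).trans hdc
    · have hj0 : (c - (c j / d j) • d) j = 0 := by simp [div_mul_cancel₀ _ hdj.ne']
      exact h (hdc hdj.ne') hj0

lemma exists_nonneg_sub_smul_support_ssubset {c d : ι → ℝ} (hc : 0 ≤ c)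
    (hdc : d.support ⊆ c.support) (hd : d ≠ 0) :
    ∃ t : ℝ, 0 ≤ c - t • d ∧ (c - t • d).support ⊂ c.support := by
  obtain ⟨i, hi⟩ := Function.ne_iff.mp hd
  rcases hi.lt_or_gt with hneg | hpos
  · obtain ⟨t, ht⟩ := exists_nonneg_sub_smul_support_ssubset_of_pos (d := -d) hc
      (by rwa [support_neg]) ⟨i, by simpa using hneg⟩
    exact ⟨-t, by simpa using ht⟩
  · exact exists_nonneg_sub_smul_support_ssubset_of_pos hc hdc ⟨i, hpos⟩

variable [AddCommGroup E] [Module ℝ E]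

-- Conic Carathéodory: minimise the support among all nonnegative preimages of `f c`.
lemma LinearMap.exists_nonneg_apply_eq_and_ker_trivial_on_support (f : (ι → ℝ) →ₗ[ℝ] E)
    {c : ι → ℝ} (hc : 0 ≤ c) :
    ∃ c', 0 ≤ c' ∧ f c' = f c ∧ ∀ d, d.support ⊆ c'.support → f d = 0 → d = 0 := by
  obtain ⟨c', ⟨hc'0, hfc'⟩, hmin⟩ := (measure fun c : ι → ℝ => c.support.ncard).wf.has_min
    {c' | 0 ≤ c' ∧ f c' = f c} ⟨c, hc, rfl⟩
  refine ⟨c', hc'0, hfc', fun d hdc hfd => ?_⟩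
  by_contra hd
  obtain ⟨t, ht0, hts⟩ := exists_nonneg_sub_smul_support_ssubset hc'0 hdc hd
  exact hmin _ ⟨ht0, by simp [hfd, hfc']⟩ (ncard_lt_ncard hts)

variable [TopologicalSpace E] [IsTopologicalAddGroup E] [ContinuousSMul ℝ E] [T2Space E]

lemma LinearMap.isClosed_image_inter_of_disjoint_ker {F : Type*} [AddCommGroup F]
    [TopologicalSpace F] [IsTopologicalAddGroup F] [Module ℝ F] [ContinuousSMul ℝ F] [T2Space F]
    [FiniteDimensional ℝ F] (f : F →ₗ[ℝ] E) {V : Submodule ℝ F} (hV : Disjoint V (LinearMap.ker f))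
    {K : Set F} (hK : IsClosed K) :
    IsClosed (f '' (K ∩ V)) := by
  have hinj : LinearMap.ker (f.domRestrict V) = ⊥ :=
    LinearMap.ker_eq_bot.mpr (LinearMap.injective_domRestrict_iff.mpr hV)
  have himage : f '' (K ∩ V) = f.domRestrict V '' (Subtype.val ⁻¹' K) := by
    ext; simp [and_assoc]
  rw [himage]
  exact (LinearMap.isClosedEmbedding_of_injective hinj).isClosedMap _
    (hK.preimage continuous_subtype_val)

theorem LinearMap.isClosed_image_nonneg (f : (ι → ℝ) →ₗ[ℝ] E) : IsClosed (f '' Ici 0) := by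
  let V : Set ι → Submodule ℝ (ι → ℝ) := fun s => Submodule.pi sᶜ fun _ => ⊥
  have hV : ∀ s d, d ∈ V s ↔ d.support ⊆ s := fun s d => by
    simp only [V, Submodule.mem_pi, mem_compl_iff, Submodule.mem_bot, support_subset_iff']
  have : f '' Ici 0 =
      ⋃ (s : Set ι) (_ : Disjoint (V s) (LinearMap.ker f)), f '' (Ici 0 ∩ V s) := by
    refine Subset.antisymm ?_ (iUnion₂_subset fun s _ => image_mono inter_subset_left)
    rintro _ ⟨c, hc, rfl⟩
    obtain ⟨c', hc'0, hfc', hker⟩ := f.exists_nonneg_apply_eq_and_ker_trivial_on_support hc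
    exact mem_iUnion₂.mpr ⟨c'.support,
      Submodule.disjoint_def.mpr fun d hd hfd => hker d ((hV _ d).mp hd) hfd,
      c', ⟨hc'0, (hV _ _).mpr subset_rfl⟩, hfc'⟩
  rw [this]
  exact isClosed_iUnion_of_finite fun s => isClosed_iUnion_of_finite fun hs =>
    f.isClosed_image_inter_of_disjoint_ker hs isClosed_Ici

end

theorem PointedCone.exists_dual_nonneg_of_disjoint_compact {F : Type*} [AddCommGroup F]
    [TopologicalSpace F] [IsTopologicalAddGroup F] [Module ℝ F] [ContinuousSMul ℝ F]
    [LocallyConvexSpace ℝ F] (C : PointedCone ℝ F) (hC : IsClosed (C : Set F)) {K : Set F}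
    (hK : IsCompact K) (hKc : Convex ℝ K) (hKC : Disjoint K C) :
    ∃ φ : StrongDual ℝ F, (∀ x ∈ C, 0 ≤ φ x) ∧ ∀ x ∈ K, φ x < 0 := by
  obtain ⟨φ, u, v, hφK, huv, hφC⟩ := geometric_hahn_banach_compact_closed hKc hK C.convex hC hKC
  have hv : v < 0 := by simpa using hφC 0 C.zero_mem
  refine ⟨φ, fun x hx => ?_, fun x hx => (hφK x hx).trans (huv.trans hv)⟩
  by_contra! hφx
  have := hφC ((v / φ x) • x) ((C.smul_mem_iff (div_pos_of_neg_of_neg hv hφx)).mpr hx)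
  rw [map_smul, smul_eq_mul, div_mul_cancel₀ _ hφx.ne] at this
  exact this.false

theorem Matrix.exists_pos_transpose_mulVec_nonneg {m n : Type*} [Fintype m] [Fintype n]
    (A : Matrix m n ℝ) (hA : ∀ x, 0 ≤ x → A *ᵥ x ≤ 0 → A *ᵥ x = 0) :
    ∃ y, (∀ i, 0 < y i) ∧ 0 ≤ Aᵀ *ᵥ y := by
  classical
  set C := (PointedCone.positive ℝ (n → ℝ)).map A.mulVecLin
  have hC : IsClosed (C : Set (m → ℝ)) := by
    rw [PointedCone.coe_map]; exact A.mulVecLin.isClosed_image_nonneg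
  have hKC : Disjoint (-stdSimplex ℝ m) C := by
    rw [Set.disjoint_left]
    rintro _ hz ⟨x, hx, rfl⟩
    have hAx := hA x hx fun i => by simpa using hz.1 i
    simpa [hAx] using hz.2
  obtain ⟨φ, hφC, hφK⟩ := C.exists_dual_nonneg_of_disjoint_compact hC
    (isCompact_stdSimplex ℝ m).neg (convex_stdSimplex ℝ m).neg hKC
  set y := (dotProductEquiv ℝ m).symm φ.toLinearMap
  have hφ : ∀ z, φ z = y ⬝ᵥ z := fun z =>
    (LinearMap.congr_fun ((dotProductEquiv ℝ m).apply_symm_apply φ.toLinearMap) z).symm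
  refine ⟨y, fun i => ?_, fun j => ?_⟩
  · have := hφK (-Pi.single i 1) (by simpa using single_mem_stdSimplex ℝ i)
    simpa [hφ] using this
  · have := hφC (A *ᵥ Pi.single j 1) ⟨Pi.single j 1, by simp, rfl⟩
    rwa [hφ, dotProduct_mulVec, dotProduct_single_one, ← mulVec_transpose] at this

theorem Matrix.mulVec_eq_zero_of_pos_transpose_mulVec_nonneg {m n : Type*} [Fintype m]
    [Fintype n] {A : Matrix m n ℝ} {y : m → ℝ} (hy : ∀ i, 0 < y i) (hAy : 0 ≤ Aᵀ *ᵥ y)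
    {x : n → ℝ} (hx : 0 ≤ x) (hAx : A *ᵥ x ≤ 0) : A *ᵥ x = 0 := by
  by_contra hne
  obtain ⟨i, hi⟩ := Function.ne_iff.mp hne
  have hneg : y ⬝ᵥ (A *ᵥ x) < 0 :=
    Finset.sum_neg' (fun i _ => mul_nonpos_of_nonneg_of_nonpos (hy i).le (hAx i))
      ⟨i, Finset.mem_univ _, mul_neg_of_pos_of_neg (hy i) ((hAx i).lt_of_ne hi)⟩
  have hnonneg : 0 ≤ y ⬝ᵥ (A *ᵥ x) := by
    rw [dotProduct_mulVec, ← mulVec_transpose]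
    exact dotProduct_nonneg_of_nonneg hAy hx
  exact hneg.not_ge hnonneg

/-- Farkas' Lemma: for `A ∈ ℝ^{m×n}`, exactly one of the following holds:
(1) there is `x ∈ ℝ^n_{≥0}` with `x ∉ ker A` and `A x ≤ 0` componentwise;
(2) there is `y ∈ ℝ^m_{>0}` with `Aᵀ y ≥ 0` componentwise. -/
theorem stmt15 (m n : ℕ) (A : Matrix (Fin m) (Fin n) ℝ) :
    Xor'
      (∃ x : Fin n → ℝ, (∀ i, 0 ≤ x i) ∧ A.mulVec x ≠ 0 ∧ ∀ i, A.mulVec x i ≤ 0)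
      (∃ y : Fin m → ℝ, (∀ i, 0 < y i) ∧ ∀ j, 0 ≤ A.transpose.mulVec y j) := by
  refine (xor_iff_or_and_not_and _ _).mpr ⟨?_, ?_⟩
  · refine or_iff_not_imp_left.mpr fun h => ?_
    obtain ⟨y, hy, hAy⟩ := A.exists_pos_transpose_mulVec_nonneg fun x hx hAx =>
      not_not.mp fun hne => h ⟨x, hx, hne, hAx⟩
    exact ⟨y, hy, hAy⟩
  · rintro ⟨⟨x, hx, hAx, hAx'⟩, y, hy, hAy⟩
    exact hAx (mulVec_eq_zero_of_pos_transpose_mulVec_nonneg hy hAy hx hAx')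
end

section
/- Consider a weakly reversible mass-action system with a semi-locking set I ⊆ {1,…,m} such that F_I = closure(C_{x₀}) ∩ L_I is a facet of C_{x₀} for some x₀ ∈ ℝ^m_{>0}. Then there exist z_j > 0 for j ∈ I and γ_i ∈ ℝ for i = 1,…,r such that γ_i z_j = β_{ij} − α_{ij} for all j ∈ I and all i ∈ {1,…,r}; that is, restricted to the coordinates in I, every column of Γ lies in the span of a single vector that is strictly positive on I. -/
open scoped BigOperators
open Matrix Filter

/-- The stoichiometric matrix `Γ ∈ ℝ^{m×r}`, `Γ j i = β i j - α i j`. -/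
noncomputable def Gamma {m r : ℕ} (a b : Fin r → Fin m → ℕ) : Matrix (Fin m) (Fin r) ℝ :=
  fun j i => (b i j : ℝ) - (a i j : ℝ)

/-- Mass-action reaction rates `R_i(x) = k_i ∏_j x_j^{α_{ij}}`. -/
noncomputable def rate {m r : ℕ} (a : Fin r → Fin m → ℕ) (k : Fin r → ℝ)
    (x : Fin m → ℝ) : Fin r → ℝ :=
  fun i => k i * ∏ j, x j ^ (a i j)

/-- A nonempty `I` is a semi-locking set (siphon) if every reaction producing a species
in `I` consumes a species in `I`. -/
def IsSemiLocking {m r : ℕ} (a b : Fin r → Fin m → ℕ) (I : Set (Fin m)) : Prop :=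
  I.Nonempty ∧ ∀ i : Fin r, (∃ j ∈ I, 0 < b i j) → ∃ l ∈ I, 0 < a i l

/-- A nonempty `I` is a locking set (deadlock) if every reaction consumes a species in `I`. -/
def IsLocking {m r : ℕ} (a : Fin r → Fin m → ℕ) (I : Set (Fin m)) : Prop :=
  I.Nonempty ∧ ∀ i : Fin r, ∃ l ∈ I, 0 < a i l

/-- `L_I = {x ∈ ℝ^m_{≥0} : x_i = 0 for i ∈ I, x_i > 0 for i ∉ I}`. -/
def LI {m : ℕ} (I : Set (Fin m)) : Set (Fin m → ℝ) :=
  {x | (∀ i, 0 ≤ x i) ∧ (∀ i ∈ I, x i = 0) ∧ ∀ i ∉ I, 0 < x i}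

/-- Boundary of the positive orthant of `ℝ^m`. -/
def posBoundary (m : ℕ) : Set (Fin m → ℝ) :=
  {x | (∀ i, 0 ≤ x i) ∧ ∃ i, x i = 0}

/-- The stoichiometric subspace `S = range Γ`. -/
noncomputable def stoichSubspace {m r : ℕ} (a b : Fin r → Fin m → ℕ) :
    Submodule ℝ (Fin m → ℝ) :=
  LinearMap.range (Gamma a b).mulVecLin

/-- The positive stoichiometric compatibility class `C_{x₀} = (x₀ + S) ∩ ℝ^m_{>0}`. -/
def compatClass {m r : ℕ} (a b : Fin r → Fin m → ℕ) (x₀ : Fin m → ℝ) :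
    Set (Fin m → ℝ) :=
  {x | (∀ i, 0 < x i) ∧ x - x₀ ∈ stoichSubspace a b}

/-- `F_I = closure(C_{x₀}) ∩ L_I`. -/
def FI {m r : ℕ} (a b : Fin r → Fin m → ℕ) (x₀ : Fin m → ℝ) (I : Set (Fin m)) :
    Set (Fin m → ℝ) :=
  closure (compatClass a b x₀) ∩ LI I

/-- The dimension of the affine hull of a set in `ℝ^m`. -/
noncomputable def setDim {m : ℕ} (F : Set (Fin m → ℝ)) : ℕ :=
  Module.finrank ℝ (affineSpan ℝ F).direction

/-- `F` is a facet of a compatibility class: nonempty with affine-hull dimension `s - 1`,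
where `s = rank Γ`. -/
def IsFacet {m r : ℕ} (a b : Fin r → Fin m → ℕ) (F : Set (Fin m → ℝ)) : Prop :=
  F.Nonempty ∧ setDim F = (Gamma a b).rank - 1

/-- `F` is a vertex: nonempty with affine-hull dimension `0`. -/
def IsVertex {m : ℕ} (F : Set (Fin m → ℝ)) : Prop :=
  F.Nonempty ∧ setDim F = 0

/-- A global forward solution of the mass-action system `ẋ = Γ R(x)`. -/
def IsForwardSolution {m r : ℕ} (a b : Fin r → Fin m → ℕ) (k : Fin r → ℝ)
    (x : ℝ → Fin m → ℝ) : Prop :=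
  ∀ t : ℝ, 0 ≤ t → HasDerivAt x ((Gamma a b).mulVec (rate a k (x t))) t

/-- The ω-limit set of a forward trajectory. -/
def omegaLimitSet {m : ℕ} (x : ℝ → Fin m → ℝ) : Set (Fin m → ℝ) :=
  {y | MapClusterPt y atTop x}

/-- `R_i ≼_I R_j` : `α i l ≥ α j l` for all `l ∈ I`, strict for some `l ∈ I`. -/
def prec {m r : ℕ} (a : Fin r → Fin m → ℕ) (I : Set (Fin m)) (i j : Fin r) : Prop :=
  (∀ l ∈ I, a j l ≤ a i l) ∧ ∃ l ∈ I, a j l < a i l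

/-- `R_I = {(i,j) : R_i ≼_I R_j}`. -/
def precSet {m r : ℕ} (a : Fin r → Fin m → ℕ) (I : Set (Fin m)) : Set (Fin r × Fin r) :=
  {p | prec a I p.1 p.2}

/-- The feasibility cone relative to `J`. -/
def feasCone {r : ℕ} (J : Set (Fin r × Fin r)) (ε : ℝ) : Set (Fin r → ℝ) :=
  {v | (∀ i, 0 ≤ v i) ∧ ∀ p ∈ J, v p.1 ≤ ε * v p.2}

/-- The criticality cone `C(I)`. -/
def critCone {m r : ℕ} (a b : Fin r → Fin m → ℕ) (I : Set (Fin m)) : Set (Fin r → ℝ) :=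
  {v | (∀ i, 0 ≤ v i) ∧ ∀ l ∈ I, (Gamma a b).mulVec v l ≤ 0}

/-- `ker(I,J,ε)`. -/
def kerIJ {m r : ℕ} (a b : Fin r → Fin m → ℕ) (I : Set (Fin m))
    (J : Set (Fin r × Fin r)) (ε : ℝ) : Set (Fin r → ℝ) :=
  {v | (∀ i, 0 ≤ v i) ∧ (∀ l ∈ I, (Gamma a b).mulVec v l = 0) ∧ ∀ p ∈ J, v p.1 = ε * v p.2}

/-- Dynamical non-emptiability (Angeli–De Leenheer–Sontag): `F_ε(I) ∩ C(I) = {0}`. -/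
def DynNonEmptiable {m r : ℕ} (a b : Fin r → Fin m → ℕ) (I : Set (Fin m)) : Prop :=
  ∃ ε > (0:ℝ), critCone a b I ∩ feasCone (precSet a I) ε = {0}

/-- Weak dynamical non-emptiability: `C(I) ∩ F_ε(J) ⊆ ker(I,J,ε)` for some `ε > 0`, `J ⊆ R_I`. -/
def WeaklyDynNonEmptiable {m r : ℕ} (a b : Fin r → Fin m → ℕ) (I : Set (Fin m)) : Prop :=
  ∃ ε > (0:ℝ), ∃ J ⊆ precSet a I, critCone a b I ∩ feasCone J ε ⊆ kerIJ a b I J ε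

/-- `I` contains the support of a semi-conservation vector. -/
def ContainsSemiConsSupport {m r : ℕ} (a b : Fin r → Fin m → ℕ) (I : Set (Fin m)) : Prop :=
  ∃ c : Fin m → ℝ, (∀ i, 0 ≤ c i) ∧ (∃ i, 0 < c i) ∧
    Matrix.vecMul c (Gamma a b) = 0 ∧ ∀ i, 0 < c i → i ∈ I

/-- A semi-locking set is critical if it contains no support of a semi-conservation vector. -/
def IsCritical {m r : ℕ} (a b : Fin r → Fin m → ℕ) (I : Set (Fin m)) : Prop :=
  ¬ ContainsSemiConsSupport a b I

/-- Weak reversibility: in the directed reaction graph on complexes, the reactant complex of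
every reaction is reachable from its product complex (equivalently, every connected
component is strongly connected). -/
def WeaklyReversible {m r : ℕ} (a b : Fin r → Fin m → ℕ) : Prop :=
  ∀ i : Fin r,
    Relation.ReflTransGen (fun y z : Fin m → ℕ => ∃ i', a i' = y ∧ b i' = z) (b i) (a i)

/-- The system is conservative: `cᵀ Γ = 0` for some strictly positive `c`. -/
def Conservative {m r : ℕ} (a b : Fin r → Fin m → ℕ) : Prop :=
  ∃ c : Fin m → ℝ, (∀ i, 0 < c i) ∧ Matrix.vecMul c (Gamma a b) = 0


/-!
Every column of `Γ` lies in the stoichiometric subspace `S`, so it suffices to show that the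
restriction `π_I(S)` of `S` to the coordinates in `I` is a line spanned by a vector positive on
`I`. Differences of points of `F_I` lie in `S` and vanish on `I`, so the affine hull of `F_I` has
direction inside `S ∩ ker π_I`; since that hull has dimension `s - 1`, rank–nullity gives
`dim π_I(S) ≤ 1`. Finally, for `x ∈ C_{x₀}` and `y ∈ F_I`, the vector `x - y ∈ S` is positive
on `I`.
-/

open Module

theorem Submodule.finrank_map_add_finrank_inf_ker {K V V₂ : Type*} [DivisionRing K]
    [AddCommGroup V] [Module K V] [AddCommGroup V₂] [Module K V₂] [FiniteDimensional K V]
    (W : Submodule K V) (f : V →ₗ[K] V₂) :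
    finrank K (W.map f) + finrank K ↥(W ⊓ LinearMap.ker f) = finrank K W := by
  have h := (f.domRestrict W).finrank_range_add_finrank_ker
  rwa [LinearMap.range_domRestrict, LinearMap.ker_domRestrict,
    ← Submodule.finrank_map_subtype_eq, Submodule.map_comap_subtype] at h

theorem Submodule.exists_smul_eq_of_finrank_le_one {K V : Type*} [DivisionRing K]
    [AddCommGroup V] [Module K V] {W : Submodule K V} [FiniteDimensional K W]
    (hW : finrank K W ≤ 1) {v w : V} (hv : v ∈ W) (hv₀ : v ≠ 0) (hw : w ∈ W) :
    ∃ c : K, c • v = w := by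
  have hspan : Submodule.span K {v} = W :=
    Submodule.eq_of_le_of_finrank_le ((Submodule.span_singleton_le_iff_mem v W).mpr hv)
      (by rwa [finrank_span_singleton hv₀])
  rwa [← hspan, Submodule.mem_span_singleton] at hw

section ReactionNetwork

variable {m r : ℕ} (a b : Fin r → Fin m → ℕ)

def restrictSpecies (I : Set (Fin m)) : (Fin m → ℝ) →ₗ[ℝ] (I → ℝ) :=
  LinearMap.funLeft ℝ ℝ Subtype.val

theorem col_Gamma_mem_stoichSubspace (i : Fin r) : (Gamma a b).col i ∈ stoichSubspace a b :=
  ⟨Pi.single i 1, Matrix.mulVec_single_one _ i⟩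

theorem finrank_stoichSubspace : finrank ℝ (stoichSubspace a b) = (Gamma a b).rank := rfl

theorem sub_mem_stoichSubspace_of_mem_closure {x₀ y : Fin m → ℝ}
    (hy : y ∈ closure (compatClass a b x₀)) : y - x₀ ∈ stoichSubspace a b := by
  have hclosed : IsClosed {z : Fin m → ℝ | z - x₀ ∈ stoichSubspace a b} :=
    (stoichSubspace a b).closed_of_finiteDimensional.preimage (continuous_sub_right x₀)
  exact closure_minimal (fun z hz => hz.2) hclosed hy

theorem direction_affineSpan_FI_le (x₀ : Fin m → ℝ) (I : Set (Fin m)) :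
    (affineSpan ℝ (FI a b x₀ I)).direction ≤
      stoichSubspace a b ⊓ LinearMap.ker (restrictSpecies I) := by
  rw [direction_affineSpan, vectorSpan_def, Submodule.span_le]
  rintro _ ⟨y, hy, y', hy', rfl⟩
  refine ⟨?_, ?_⟩
  · simpa using sub_mem (sub_mem_stoichSubspace_of_mem_closure a b hy.1)
      (sub_mem_stoichSubspace_of_mem_closure a b hy'.1)
  · ext j
    simp [restrictSpecies, hy.2.2.1 j j.2, hy'.2.2.1 j j.2]

theorem finrank_map_restrictSpecies_le_one {x₀ : Fin m → ℝ} {I : Set (Fin m)}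
    (hfacet : IsFacet a b (FI a b x₀ I)) :
    finrank ℝ ((stoichSubspace a b).map (restrictSpecies I)) ≤ 1 := by
  have hle := Submodule.finrank_mono (direction_affineSpan_FI_le a b x₀ I)
  have hrn := (stoichSubspace a b).finrank_map_add_finrank_inf_ker (restrictSpecies I)
  have hdim : finrank ℝ (affineSpan ℝ (FI a b x₀ I)).direction = (Gamma a b).rank - 1 :=
    hfacet.2
  rw [finrank_stoichSubspace] at hrn
  omega

theorem exists_mem_stoichSubspace_pos_on {x₀ : Fin m → ℝ} {I : Set (Fin m)}
    (hF : (FI a b x₀ I).Nonempty) :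
    ∃ v ∈ stoichSubspace a b, ∀ j ∈ I, 0 < v j := by
  obtain ⟨y, hyC, hyL⟩ := hF
  obtain ⟨x, hx⟩ : (compatClass a b x₀).Nonempty := closure_nonempty_iff.mp ⟨y, hyC⟩
  refine ⟨x - y, ?_, fun j hj => by simpa [hyL.2.1 j hj] using hx.1 j⟩
  simpa using sub_mem hx.2 (sub_mem_stoichSubspace_of_mem_closure a b hyC)

end ReactionNetwork

theorem stmt16_general {m r : ℕ} (a b : Fin r → Fin m → ℕ)
    (I : Set (Fin m)) (hI : IsSemiLocking a b I)
    (x₀ : Fin m → ℝ)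
    (hfacet : IsFacet a b (FI a b x₀ I)) :
    ∃ z : Fin m → ℝ, ∃ γ : Fin r → ℝ, (∀ j ∈ I, 0 < z j) ∧
      ∀ j ∈ I, ∀ i : Fin r, γ i * z j = (b i j : ℝ) - (a i j : ℝ) := by
  set π := restrictSpecies I
  obtain ⟨v, hvS, hvpos⟩ := exists_mem_stoichSubspace_pos_on a b hfacet.1
  obtain ⟨j₀, hj₀⟩ := hI.1
  have hπv : π v ≠ 0 := fun h => (hvpos j₀ hj₀).ne' (congrFun h ⟨j₀, hj₀⟩)
  have hγ (i : Fin r) : ∃ γ : ℝ, γ • π v = π ((Gamma a b).col i) :=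
    Submodule.exists_smul_eq_of_finrank_le_one (finrank_map_restrictSpecies_le_one a b hfacet)
      (Submodule.mem_map_of_mem hvS) hπv
      (Submodule.mem_map_of_mem (col_Gamma_mem_stoichSubspace a b i))
  choose γ hγ using hγ
  refine ⟨v, γ, hvpos, fun j hj i => ?_⟩
  simpa [π, restrictSpecies, Gamma] using congrFun (hγ i) ⟨j, hj⟩

/-- for a weakly reversible mass-action system with a semi-locking set `I`
such that `F_I` is a facet, there exist `z_j > 0` (`j ∈ I`) and `γ_i ∈ ℝ` with
`γ_i z_j = β_{ij} - α_{ij}` for all `j ∈ I` and all reactions `i`. -/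
theorem stmt16 {m r : ℕ} (a b : Fin r → Fin m → ℕ) (k : Fin r → ℝ) (hk : ∀ i, 0 < k i)
    (hwr : WeaklyReversible a b)
    (I : Set (Fin m)) (hI : IsSemiLocking a b I)
    (x₀ : Fin m → ℝ) (hx₀ : ∀ i, 0 < x₀ i)
    (hfacet : IsFacet a b (FI a b x₀ I)) :
    ∃ z : Fin m → ℝ, ∃ γ : Fin r → ℝ, (∀ j ∈ I, 0 < z j) ∧
      ∀ j ∈ I, ∀ i : Fin r, γ i * z j = (b i j : ℝ) - (a i j : ℝ) :=
  stmt16_general a b I hI x₀ hfacet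
end
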